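/- arXiv:1203.0919 — 2 statements merged into one kernel-verified Lean document; each statement's English description precedes it below -/
import Mathlib

section
/- Let Ω be a measurable space, 𝒜 a finite partition of Ω into nonempty measurable sets, D a finite nonempty set, L : D × Ω → ℝ with each f_d = −L(d,·) bounded and measurable, L̂ : D × 𝒜 → ℝ, ℳ a nonempty set of probability measures on Ω, and ℳ̂ a nonempty set of probability mass functions on 𝒜. If 0 < ε < 1/2, δ ≥ 0, L ∼_ε L̂ and ℳ ∼_δ ℳ̂, then for every γ ≥ 0: opt^γ(𝒜,D,ℳ̂,L̂) ⊆ opt^{γ(1+2ε) + 2(ε + δ(1+2ε))}(Ω,D,ℳ,L). -/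
/-!
Integrating `f_d` against `P` is compared with summing `f̂_d` against `P̂` in two steps: on each
cell `f_d` is within `ε R_d` of `f̂_d`, so `|E_P(d) - ∑_A f̂_d(A) P(A)| ≤ ε R_d`; and since `P` and
`P̂` have the same total mass, moving from `P(A)` to `P̂(A)` costs at most `R̂_d δ`. The range of
`f̂_d` exceeds that of `f_d` by at most `2 ε R_d`, so `R̂_D ≤ (1 + 2ε) R_D`. Each `d` thus changes its
expected utility by at most `(ε + δ (1 + 2ε)) R_D`, and a `γ`-optimal `d` for `P̂` loses at most
twice this against any `e` under `P`.
-/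

open MeasureTheory Set

/-- Only `c - inf c` enters, since `p - q` has total mass zero. -/
theorem Finset.abs_sum_mul_sub_sum_mul_le {ι : Type*} (s : Finset ι) (hs : s.Nonempty)
    (c p q : ι → ℝ) (hpq : ∑ i ∈ s, p i = ∑ i ∈ s, q i) :
    |∑ i ∈ s, c i * p i - ∑ i ∈ s, c i * q i| ≤
      (s.sup' hs c - s.inf' hs c) * ∑ i ∈ s, |p i - q i| := by
  set m := s.inf' hs c
  have hshift : ∑ i ∈ s, c i * p i - ∑ i ∈ s, c i * q i =
      ∑ i ∈ s, (c i - m) * (p i - q i) := by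
    simp only [sub_mul, mul_sub, Finset.sum_sub_distrib, ← Finset.mul_sum, hpq]
    ring
  rw [hshift, Finset.mul_sum]
  refine (Finset.abs_sum_le_sum_abs _ _).trans (Finset.sum_le_sum fun i hi => ?_)
  have hm : m ≤ c i := Finset.inf'_le c hi
  rw [abs_mul, abs_of_nonneg (sub_nonneg.2 hm)]
  exact mul_le_mul_of_nonneg_right (by linarith [Finset.le_sup' c hi]) (abs_nonneg _)

theorem sup'_sub_inf'_le_of_abs_sub_le {Ω : Type*} {𝒜 : Finset (Set Ω)} (h𝒜 : 𝒜.Nonempty)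
    (hne : ∀ A ∈ 𝒜, A.Nonempty)
    {f : Ω → ℝ} (hfa : BddAbove (range f)) (hfb : BddBelow (range f))
    (g : Set Ω → ℝ) {r : ℝ} (hfg : ∀ A ∈ 𝒜, ∀ w ∈ A, |f w - g A| ≤ r) :
    𝒜.sup' h𝒜 g - 𝒜.inf' h𝒜 g ≤ sSup (range f) - sInf (range f) + 2 * r := by
  have hsup : 𝒜.sup' h𝒜 g ≤ sSup (range f) + r := by
    refine Finset.sup'_le _ _ fun A hA => ?_
    obtain ⟨w, hw⟩ := hne A hA
    linarith [(abs_le.1 (hfg A hA w hw)).1, le_csSup hfa (mem_range_self w)]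
  have hinf : sInf (range f) - r ≤ 𝒜.inf' h𝒜 g := by
    refine Finset.le_inf' _ _ fun A hA => ?_
    obtain ⟨w, hw⟩ := hne A hA
    linarith [(abs_le.1 (hfg A hA w hw)).2, csInf_le hfb (mem_range_self w)]
  linarith

section Partition

variable {Ω : Type*} [MeasurableSpace Ω] {𝒜 : Finset (Set Ω)}

theorem sum_measureReal_of_partition (hmeas : ∀ A ∈ 𝒜, MeasurableSet A)
    (hdisj : (𝒜 : Set (Set Ω)).PairwiseDisjoint id) (hcover : ⋃ A ∈ 𝒜, A = univ)
    (μ : Measure Ω) [IsFiniteMeasure μ] :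
    ∑ A ∈ 𝒜, μ.real A = μ.real univ := by
  rw [← hcover]
  exact (measureReal_biUnion_finset hdisj hmeas).symm

theorem abs_integral_sub_sum_le_of_partition (hmeas : ∀ A ∈ 𝒜, MeasurableSet A)
    (hdisj : (𝒜 : Set (Set Ω)).PairwiseDisjoint id) (hcover : ⋃ A ∈ 𝒜, A = univ)
    (μ : Measure Ω) [IsFiniteMeasure μ] {f : Ω → ℝ} (hf : Integrable f μ)
    (g : Set Ω → ℝ) {C : ℝ} (hfg : ∀ A ∈ 𝒜, ∀ w ∈ A, |f w - g A| ≤ C) :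
    |∫ w, f w ∂μ - ∑ A ∈ 𝒜, g A * μ.real A| ≤ C * μ.real univ := by
  have hsplit : ∫ w, f w ∂μ = ∑ A ∈ 𝒜, ∫ w in A, f w ∂μ := by
    rw [← setIntegral_univ, ← hcover]
    exact integral_biUnion_finset 𝒜 hmeas hdisj fun A _ => hf.integrableOn
  have hcell : ∀ A ∈ 𝒜, |∫ w in A, f w ∂μ - g A * μ.real A| ≤ C * μ.real A := by
    intro A hA
    have hconst : ∫ w in A, (f w - g A) ∂μ = ∫ w in A, f w ∂μ - g A * μ.real A := by
      rw [integral_sub hf.restrict (integrable_const _), setIntegral_const, smul_eq_mul,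
        mul_comm]
    rw [← hconst]
    exact norm_setIntegral_le_of_norm_le_const (measure_lt_top μ A)
      fun w hw => (Real.norm_eq_abs _).trans_le (hfg A hA w hw)
  rw [hsplit, ← Finset.sum_sub_distrib, ← sum_measureReal_of_partition hmeas hdisj hcover μ,
    Finset.mul_sum]
  exact (Finset.abs_sum_le_sum_abs _ _).trans (Finset.sum_le_sum hcell)

theorem abs_integral_sub_sum_le_of_partition_of_sum_abs_sub_le (h𝒜 : 𝒜.Nonempty)
    (hmeas : ∀ A ∈ 𝒜, MeasurableSet A)
    (hdisj : (𝒜 : Set (Set Ω)).PairwiseDisjoint id) (hcover : ⋃ A ∈ 𝒜, A = univ)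
    (P : Measure Ω) [IsProbabilityMeasure P] {f : Ω → ℝ} (hf : Integrable f P)
    (g : Set Ω → ℝ) {C : ℝ} (hfg : ∀ A ∈ 𝒜, ∀ w ∈ A, |f w - g A| ≤ C)
    (q : Set Ω → ℝ) (hq : ∑ A ∈ 𝒜, q A = 1) {δ : ℝ}
    (hPq : ∑ A ∈ 𝒜, |P.real A - q A| ≤ δ) :
    |∫ w, f w ∂P - ∑ A ∈ 𝒜, g A * q A| ≤ C + (𝒜.sup' h𝒜 g - 𝒜.inf' h𝒜 g) * δ := by
  have hint := abs_integral_sub_sum_le_of_partition hmeas hdisj hcover P hf g hfg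
  rw [probReal_univ, mul_one] at hint
  have hmass : ∑ A ∈ 𝒜, P.real A = ∑ A ∈ 𝒜, q A := by
    rw [hq, sum_measureReal_of_partition hmeas hdisj hcover P, probReal_univ]
  have hsum := Finset.abs_sum_mul_sub_sum_mul_le 𝒜 h𝒜 g (fun A => P.real A) q hmass
  have hwidth : 0 ≤ 𝒜.sup' h𝒜 g - 𝒜.inf' h𝒜 g := by
    obtain ⟨A, hA⟩ := h𝒜
    linarith [Finset.le_sup' g hA, Finset.inf'_le g hA]
  calc |∫ w, f w ∂P - ∑ A ∈ 𝒜, g A * q A|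
      ≤ |∫ w, f w ∂P - ∑ A ∈ 𝒜, g A * P.real A| +
          |∑ A ∈ 𝒜, g A * P.real A - ∑ A ∈ 𝒜, g A * q A| := abs_sub_le _ _ _
    _ ≤ C + (𝒜.sup' h𝒜 g - 𝒜.inf' h𝒜 g) * δ := by
        gcongr
        exact hsum.trans (mul_le_mul_of_nonneg_left hPq hwidth)

end Partition

theorem integrable_of_bddAbove_of_bddBelow {Ω : Type*} [MeasurableSpace Ω] (μ : Measure Ω)
    [IsFiniteMeasure μ] {f : Ω → ℝ} (hf : Measurable f) (ha : BddAbove (range f))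
    (hb : BddBelow (range f)) : Integrable f μ := by
  obtain ⟨C, hC⟩ := isBounded_iff_forall_norm_le.1 (isBounded_iff_bddBelow_bddAbove.2 ⟨hb, ha⟩)
  exact .of_bound hf.aestronglyMeasurable C (ae_of_all _ fun w => hC _ (mem_range_self w))

theorem stmt_7_general {Ω : Type*} [MeasurableSpace Ω]
    {D : Type*} [Fintype D] [Nonempty D]
    (𝒜 : Finset (Set Ω)) (h𝒜 : 𝒜.Nonempty)
    (hne : ∀ A ∈ 𝒜, A.Nonempty)
    (hmeas : ∀ A ∈ 𝒜, MeasurableSet A)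
    (hdisj : ∀ A ∈ 𝒜, ∀ B ∈ 𝒜, A ≠ B → Disjoint A B)
    (hcover : (⋃ A ∈ 𝒜, A) = Set.univ)
    (L : D × Ω → ℝ) (Lhat : D → Set Ω → ℝ)
    (hfmeas : ∀ d : D, Measurable fun w => -L (d, w))
    (hfa : ∀ d : D, BddAbove (Set.range fun w => -L (d, w)))
    (hfb : ∀ d : D, BddBelow (Set.range fun w => -L (d, w)))
    (ℳ : Set (Measure Ω))
    (hℳprob : ∀ P ∈ ℳ, IsProbabilityMeasure P)
    (ℳhat : Set (Set Ω → ℝ))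
    (hℳhatprob : ∀ Phat ∈ ℳhat, (∀ A ∈ 𝒜, 0 ≤ Phat A) ∧ ∑ A ∈ 𝒜, Phat A = 1)
    (ε δ : ℝ) (hε0 : 0 < ε) (hδ : 0 ≤ δ)
    (hLsim : ∀ d : D, ∀ A ∈ 𝒜, ∀ w ∈ A,
      |(-L (d, w)) - (-(Lhat d A))| ≤
        (sSup (Set.range fun w' => -L (d, w')) -
          sInf (Set.range fun w' => -L (d, w'))) * ε)
    (hMsim2 : ∀ Phat ∈ ℳhat, ∃ P ∈ ℳ, ∑ A ∈ 𝒜, |(P A).toReal - Phat A| ≤ δ)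
    (γ : ℝ) (hγ : 0 ≤ γ) :
    {d : D | ∃ Phat ∈ ℳhat, ∀ e : D,
        (∑ A ∈ 𝒜, (-(Lhat e A)) * Phat A) - (∑ A ∈ 𝒜, (-(Lhat d A)) * Phat A) ≤
          γ * Finset.univ.sup' Finset.univ_nonempty
            (fun d' : D => 𝒜.sup' h𝒜 (fun A => -(Lhat d' A)) -
              𝒜.inf' h𝒜 (fun A => -(Lhat d' A)))} ⊆
    {d : D | ∃ P ∈ ℳ, ∀ e : D,
        (∫ w, (-L (e, w)) ∂P) - (∫ w, (-L (d, w)) ∂P) ≤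
          (γ * (1 + 2 * ε) + 2 * (ε + δ * (1 + 2 * ε))) *
            Finset.univ.sup' Finset.univ_nonempty
              (fun d' : D => sSup (Set.range fun w => -L (d', w)) -
                sInf (Set.range fun w => -L (d', w)))} := by
  rintro d ⟨Phat, hPhat, hopt⟩
  obtain ⟨P, hP, hPPhat⟩ := hMsim2 Phat hPhat
  have : IsProbabilityMeasure P := hℳprob P hP
  have hdisj' : (𝒜 : Set (Set Ω)).PairwiseDisjoint id := fun A hA B hB => hdisj A hA B hB
  set R := Finset.univ.sup' Finset.univ_nonempty fun d' : D =>
    sSup (range fun w => -L (d', w)) - sInf (range fun w => -L (d', w))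
  have hRd (d' : D) : sSup (range fun w => -L (d', w)) - sInf (range fun w => -L (d', w)) ≤ R :=
    Finset.le_sup' (fun d' : D =>
      sSup (range fun w => -L (d', w)) - sInf (range fun w => -L (d', w))) (Finset.mem_univ d')
  have hLsim' (d' : D) : ∀ A ∈ 𝒜, ∀ w ∈ A, |-L (d', w) - -Lhat d' A| ≤ R * ε :=
    fun A hA w hw => (hLsim d' A hA w hw).trans (by gcongr; exact hRd d')
  have hwidth (d' : D) : 𝒜.sup' h𝒜 (fun A => -Lhat d' A) - 𝒜.inf' h𝒜 (fun A => -Lhat d' A) ≤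
      R * (1 + 2 * ε) := by
    linarith [sup'_sub_inf'_le_of_abs_sub_le h𝒜 hne (hfa d') (hfb d') _ (hLsim d'), hRd d',
      mul_le_mul_of_nonneg_right (hRd d') hε0.le]
  have happrox (d' : D) : |∫ w, -L (d', w) ∂P - ∑ A ∈ 𝒜, -Lhat d' A * Phat A| ≤
      R * ε + R * (1 + 2 * ε) * δ :=
    (abs_integral_sub_sum_le_of_partition_of_sum_abs_sub_le h𝒜 hmeas hdisj' hcover P
      (integrable_of_bddAbove_of_bddBelow P (hfmeas d') (hfa d') (hfb d')) _ (hLsim' d')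
      Phat (hℳhatprob Phat hPhat).2 hPPhat).trans (by gcongr; exact hwidth d')
  refine ⟨P, hP, fun e => ?_⟩
  have hRhat : γ * Finset.univ.sup' Finset.univ_nonempty (fun d' : D =>
      𝒜.sup' h𝒜 (fun A => -Lhat d' A) - 𝒜.inf' h𝒜 (fun A => -Lhat d' A)) ≤
      γ * (R * (1 + 2 * ε)) := by
    gcongr
    exact Finset.sup'_le _ _ fun d' _ => hwidth d'
  linarith [hopt e, abs_le.1 (happrox e), abs_le.1 (happrox d)]

/-- Theorem 1, Eq. (2): if `L ∼_ε L̂` and `ℳ ∼_δ ℳ̂`, then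
`opt^γ(𝒜,D,ℳ̂,L̂) ⊆ opt^{γ(1+2ε) + 2(ε + δ(1+2ε))}(Ω,D,ℳ,L)`. -/
theorem stmt_7 {Ω : Type*} [MeasurableSpace Ω] [Nonempty Ω]
    {D : Type*} [Fintype D] [Nonempty D]
    (𝒜 : Finset (Set Ω)) (h𝒜 : 𝒜.Nonempty)
    (hne : ∀ A ∈ 𝒜, A.Nonempty)
    (hmeas : ∀ A ∈ 𝒜, MeasurableSet A)
    (hdisj : ∀ A ∈ 𝒜, ∀ B ∈ 𝒜, A ≠ B → Disjoint A B)
    (hcover : (⋃ A ∈ 𝒜, A) = Set.univ)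
    (L : D × Ω → ℝ) (Lhat : D → Set Ω → ℝ)
    (hfmeas : ∀ d : D, Measurable fun w => -L (d, w))
    (hfa : ∀ d : D, BddAbove (Set.range fun w => -L (d, w)))
    (hfb : ∀ d : D, BddBelow (Set.range fun w => -L (d, w)))
    (ℳ : Set (Measure Ω)) (hℳne : ℳ.Nonempty)
    (hℳprob : ∀ P ∈ ℳ, IsProbabilityMeasure P)
    (ℳhat : Set (Set Ω → ℝ)) (hℳhatne : ℳhat.Nonempty)
    (hℳhatprob : ∀ Phat ∈ ℳhat, (∀ A ∈ 𝒜, 0 ≤ Phat A) ∧ ∑ A ∈ 𝒜, Phat A = 1)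
    (ε δ : ℝ) (hε0 : 0 < ε) (hε2 : ε < 1 / 2) (hδ : 0 ≤ δ)
    (hLsim : ∀ d : D, ∀ A ∈ 𝒜, ∀ w ∈ A,
      |(-L (d, w)) - (-(Lhat d A))| ≤
        (sSup (Set.range fun w' => -L (d, w')) -
          sInf (Set.range fun w' => -L (d, w'))) * ε)
    (hMsim1 : ∀ P ∈ ℳ, ∃ Phat ∈ ℳhat, ∑ A ∈ 𝒜, |(P A).toReal - Phat A| ≤ δ)
    (hMsim2 : ∀ Phat ∈ ℳhat, ∃ P ∈ ℳ, ∑ A ∈ 𝒜, |(P A).toReal - Phat A| ≤ δ)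
    (γ : ℝ) (hγ : 0 ≤ γ) :
    {d : D | ∃ Phat ∈ ℳhat, ∀ e : D,
        (∑ A ∈ 𝒜, (-(Lhat e A)) * Phat A) - (∑ A ∈ 𝒜, (-(Lhat d A)) * Phat A) ≤
          γ * Finset.univ.sup' Finset.univ_nonempty
            (fun d' : D => 𝒜.sup' h𝒜 (fun A => -(Lhat d' A)) -
              𝒜.inf' h𝒜 (fun A => -(Lhat d' A)))} ⊆
    {d : D | ∃ P ∈ ℳ, ∀ e : D,
        (∫ w, (-L (e, w)) ∂P) - (∫ w, (-L (d, w)) ∂P) ≤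
          (γ * (1 + 2 * ε) + 2 * (ε + δ * (1 + 2 * ε))) *
            Finset.univ.sup' Finset.univ_nonempty
              (fun d' : D => sSup (Set.range fun w => -L (d', w)) -
                sInf (Set.range fun w => -L (d', w)))} :=
  stmt_7_general 𝒜 h𝒜 hne hmeas hdisj hcover L Lhat hfmeas hfa hfb ℳ hℳprob ℳhat hℳhatprob ε δ hε0
    hδ hLsim hMsim2 γ hγ
end

section
/- Let Ω be a nonempty finite set, D a finite nonempty set, L : D × Ω → ℝ with f_d = −L(d,·) and R_D = max_{d∈D}(max_w f_d(w) − min_w f_d(w)) > 0, and ℳ a nonempty set of probability vectors on Ω. Then opt(Ω,D,closure(ℳ),L) = ⋂_{ε>0} opt^ε(Ω,D,ℳ,L), where opt denotes opt^0 and the closure is taken in ℝ^Ω with the standard topology. -/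
/-- Expected utility of decision `d` under probability vector `p`,
for loss `L` (`f_d = -L(d,·)`). -/
def expUtil {Ω D : Type*} [Fintype Ω] (p : Ω → ℝ) (L : D → Ω → ℝ) (d : D) : ℝ :=
  ∑ w, p w * (-L d w)

/-- `R_D = max_{d∈D} (max_w f_d(w) − min_w f_d(w))`. -/
noncomputable def lossRange {Ω D : Type*} [Fintype Ω] [Nonempty Ω] [Fintype D] [Nonempty D]
    (L : D → Ω → ℝ) : ℝ :=
  Finset.univ.sup' Finset.univ_nonempty
    (fun d : D => Finset.univ.sup' Finset.univ_nonempty (fun w : Ω => -L d w) -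
      Finset.univ.inf' Finset.univ_nonempty (fun w : Ω => -L d w))

/-- The set of `ε`-optimal decisions `opt^ε(Ω,D,ℳ,L)`. -/
noncomputable def optSet {Ω D : Type*} [Fintype Ω] [Nonempty Ω] [Fintype D] [Nonempty D]
    (ε : ℝ) (ℳ : Set (Ω → ℝ)) (L : D → Ω → ℝ) : Set D :=
  {d : D | ∃ p ∈ ℳ, ∀ e : D, expUtil p L e - expUtil p L d ≤ ε * lossRange L}

/-!
The regret `p ↦ max_e E_p(e) − E_p(d)` of a decision `d` is continuous in `p`, and
`d ∈ opt^ε(ℳ)` says exactly that the regret drops to `ε·R_D` somewhere on `ℳ`.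
If the regret vanishes at a point of `closure ℳ`, it is small on a neighbourhood, which meets `ℳ`.
Conversely `closure ℳ` lies in the compact standard simplex, so the regret attains its minimum
there; that minimum is at most every `ε·R_D`, hence at most `0` because `R_D > 0`.
-/

open Finset

theorem exists_mem_closure_le_iff {X : Type*} [TopologicalSpace X] {S : Set X}
    (hS : IsCompact (closure S)) {g : X → ℝ} (hg : Continuous g) (c : ℝ) :
    (∃ p ∈ closure S, g p ≤ c) ↔ ∀ δ > 0, ∃ q ∈ S, g q ≤ c + δ := by
  constructor
  · rintro ⟨p, hpS, hpc⟩ δ hδ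
    obtain ⟨q, hq, hqS⟩ := mem_closure_iff.mp hpS {x | g x < c + δ}
      (isOpen_lt hg continuous_const) (show g p < c + δ by linarith)
    exact ⟨q, hqS, le_of_lt hq⟩
  · intro h
    obtain ⟨q₀, hq₀S, -⟩ := h 1 one_pos
    obtain ⟨p, hpS, hpmin⟩ := hS.exists_isMinOn ⟨q₀, subset_closure hq₀S⟩ hg.continuousOn
    refine ⟨p, hpS, le_of_forall_pos_le_add fun δ hδ => ?_⟩
    obtain ⟨q, hqS, hqc⟩ := h δ hδ
    exact (hpmin (subset_closure hqS)).trans hqc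

theorem forall_pos_mul_iff {R : ℝ} (hR : 0 < R) {P : ℝ → Prop} :
    (∀ ε > 0, P (ε * R)) ↔ ∀ δ > 0, P δ := by
  refine ⟨fun h δ hδ => ?_, fun h ε hε => h _ (mul_pos hε hR)⟩
  simpa only [div_mul_cancel₀ δ hR.ne'] using h (δ / R) (div_pos hδ hR)

theorem continuous_expUtil {Ω D : Type*} [Fintype Ω] (L : D → Ω → ℝ) (e : D) :
    Continuous fun p : Ω → ℝ => expUtil p L e :=
  continuous_finsetSum _ fun w _ => (continuous_apply w).mul continuous_const

section Regret

variable {Ω D : Type*} [Fintype Ω] [Fintype D] [Nonempty D]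

noncomputable def regret (L : D → Ω → ℝ) (d : D) (p : Ω → ℝ) : ℝ :=
  univ.sup' univ_nonempty (fun e => expUtil p L e) - expUtil p L d

theorem continuous_regret (L : D → Ω → ℝ) (d : D) : Continuous (regret L d) :=
  (Continuous.finset_sup'_apply univ_nonempty fun e _ => continuous_expUtil L e).sub
    (continuous_expUtil L d)

theorem regret_le_iff {L : D → Ω → ℝ} {d : D} {p : Ω → ℝ} {c : ℝ} :
    regret L d p ≤ c ↔ ∀ e, expUtil p L e - expUtil p L d ≤ c := by
  simp only [regret, sub_le_iff_le_add, sup'_le_iff, mem_univ, true_implies]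

theorem mem_optSet_iff [Nonempty Ω] {ε : ℝ} {ℳ : Set (Ω → ℝ)} {L : D → Ω → ℝ} {d : D} :
    d ∈ optSet ε ℳ L ↔ ∃ p ∈ ℳ, regret L d p ≤ ε * lossRange L := by
  simp only [optSet, Set.mem_ofPred_eq, regret_le_iff]

end Regret

theorem isCompact_closure_of_subset_stdSimplex {Ω : Type*} [Fintype Ω] {ℳ : Set (Ω → ℝ)}
    (hℳ : ℳ ⊆ stdSimplex ℝ Ω) : IsCompact (closure ℳ) :=
  (isCompact_stdSimplex ℝ Ω).of_isClosed_subset isClosed_closure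
    (closure_minimal hℳ (isClosed_stdSimplex ℝ Ω))

theorem stmt_15_general {Ω : Type*} [Fintype Ω] [Nonempty Ω]
    {D : Type*} [Fintype D] [Nonempty D]
    (L : D → Ω → ℝ) (hR : 0 < lossRange L)
    (ℳ : Set (Ω → ℝ))
    (hℳ : ∀ p ∈ ℳ, (∀ w, 0 ≤ p w) ∧ ∑ w, p w = 1) :
    optSet 0 (closure ℳ) L = ⋂ (ε : ℝ) (_ : 0 < ε), optSet ε ℳ L := by
  ext d
  simp only [Set.mem_iInter, mem_optSet_iff, zero_mul]
  rw [exists_mem_closure_le_iff (isCompact_closure_of_subset_stdSimplex hℳ)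
    (continuous_regret L d), forall_pos_mul_iff hR (P := fun δ => ∃ q ∈ ℳ, regret L d q ≤ δ)]
  simp only [zero_add, gt_iff_lt]

/-- `opt(Ω,D,closure(ℳ),L) = ⋂_{ε>0} opt^ε(Ω,D,ℳ,L)`, where `opt = opt^0`. -/
theorem stmt_15 {Ω : Type*} [Fintype Ω] [Nonempty Ω]
    {D : Type*} [Fintype D] [Nonempty D]
    (L : D → Ω → ℝ) (hR : 0 < lossRange L)
    (ℳ : Set (Ω → ℝ)) (hℳne : ℳ.Nonempty)
    (hℳ : ∀ p ∈ ℳ, (∀ w, 0 ≤ p w) ∧ ∑ w, p w = 1) :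
    optSet 0 (closure ℳ) L = ⋂ (ε : ℝ) (_ : 0 < ε), optSet ε ℳ L :=
  stmt_15_general L hR ℳ hℳ
end
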